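/- Volume of the intersection of a boundary strip with a ball (estimate (4.2) of the paper): For every bounded convex open set Ω ⊂ ℝ³ there exists a constant C (depending only on Ω) such that for all real numbers h, d with 0 < h ≤ d and every point x₀ ∈ ℝ³, the Lebesgue measure of the set {x ∈ Ω : dist(x, ∂Ω) ≤ h and |x − x₀| ≤ d} is at most C h d². -/

import Mathlib

open MeasureTheory Metric Set
open scoped RealInnerProductSpace ENNReal NNReal

noncomputable section

/-- Three-dimensional Euclidean space. -/
abbrev E3 : Type := EuclideanSpace ℝ (Fin 3)

/-- A convex polyhedron: a bounded convex open set which is the interior of the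
convex hull of a finite set of points. -/
def IsConvexPolyhedron (Ω : Set E3) : Prop :=
  IsOpen Ω ∧ Bornology.IsBounded Ω ∧ Convex ℝ Ω ∧
    ∃ S : Finset E3, Ω = interior (convexHull ℝ (S : Set E3))

/-- The closed tetrahedron with vertices `v 0, v 1, v 2, v 3`. -/
def tet (v : Fin 4 → E3) : Set E3 := convexHull ℝ (Set.range v)

/-- A quasi-uniform conforming tetrahedral partition of `Ω` with mesh size `h`
and quasi-uniformity constant `c`, recorded by the vertex tuples of its tetrahedra. -/
def IsTetPartition (Ω : Set E3) (T : Finset (Fin 4 → E3)) (h c : ℝ) : Prop :=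
  (∀ v ∈ T, AffineIndependent ℝ v) ∧
  (⋃ v ∈ T, tet v) = closure Ω ∧
  (∀ v ∈ T, ∀ w ∈ T, tet v ≠ tet w → interior (tet v) ∩ interior (tet w) = ∅) ∧
  (∀ v ∈ T, ∀ w ∈ T, tet v ≠ tet w →
    tet v ∩ tet w = ∅ ∨ tet v ∩ tet w = convexHull ℝ (Set.range v ∩ Set.range w)) ∧
  (∀ v ∈ T, Metric.diam (tet v) ≤ h) ∧
  (∀ v ∈ T, ∃ x : E3, Metric.closedBall x (c * h) ⊆ tet v)

/-- The finite element space `S_h` of continuous piecewise polynomials of degree `≤ r`. -/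
def MemSh (Ω : Set E3) (T : Finset (Fin 4 → E3)) (r : ℕ) (u : E3 → ℝ) : Prop :=
  ContinuousOn u (closure Ω) ∧
  ∀ v ∈ T, ∃ p : MvPolynomial (Fin 3) ℝ,
    p.totalDegree ≤ r ∧ ∀ x ∈ tet v, u x = MvPolynomial.eval (fun i => x i) p

/-- The subspace `S̊_h` of finite element functions vanishing on the boundary. -/
def MemSh0 (Ω : Set E3) (T : Finset (Fin 4 → E3)) (r : ℕ) (u : E3 → ℝ) : Prop :=
  MemSh Ω T r u ∧ ∀ x ∈ frontier Ω, u x = 0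

/-- The Laplacian, as the trace of the Hessian. -/
def lap (v : E3 → ℝ) (x : E3) : ℝ :=
  ∑ i : Fin 3,
    fderiv ℝ (fun y => fderiv ℝ v y (EuclideanSpace.single i 1)) x (EuclideanSpace.single i 1)

/-- The `L^p(A)` norm. -/
def LpN (A : Set E3) (p : ℝ) (w : E3 → ℝ) : ℝ := (∫ x in A, |w x| ^ p) ^ (1 / p)

/-- The `W^{1,p}(A)` norm. -/
def W1pN (A : Set E3) (p : ℝ) (w : E3 → ℝ) : ℝ :=
  (∫ x in A, (|w x| ^ p + ‖gradient w x‖ ^ p)) ^ (1 / p)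

/-- The `W^{2,p}(A)` norm. -/
def W2pN (A : Set E3) (p : ℝ) (w : E3 → ℝ) : ℝ :=
  (∫ x in A, (|w x| ^ p + ‖gradient w x‖ ^ p + ‖iteratedFDeriv ℝ 2 w x‖ ^ p)) ^ (1 / p)

/-!
Fix `closedBall z r ⊆ Ω ⊆ closedBall z R`. By convexity, moving a point `x ∈ Ω` the fraction
`s` of the way towards the centre of a ball `closedBall w ρ ⊆ Ω` lands at distance at least `s * ρ`
from `∂Ω`.

For `4 * d > r` it suffices to bound the whole strip `Λ_h`: the homothety of ratio `1 - 2h/r`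
about `z` maps `Ω` into `Ω \ Λ_h`, so `|Λ_h| ≤ (1 - (1 - 2h/r)^n) |Ω| ≤ 2nh|Ω|/r`.

For `4 * d ≤ r`, fix `p` in `S = Λ_h ∩ closedBall x₀ d` and let `v = (4h/r) • (z - p)`. For
`x ∈ S` the ball `closedBall (z + (x - p)) (r/2)` lies in `Ω`, so `x + k • v` leaves `Λ_h` for
`1 ≤ k ≤ d/h`. Hence the translates `k • v +ᵥ S`, `0 ≤ k ≤ d/h`, are pairwise disjoint, and they lie
in `closedBall x₀ ((1 + 4R/r) d)`, whence `(d/h) |S| ≲ d^n`.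
-/

open scoped Pointwise
open Module

theorem IsOpen.le_infDist_frontier {α : Type*} [PseudoMetricSpace α] {Ω : Set α}
    (hΩ : IsOpen Ω) (hfr : (frontier Ω).Nonempty) {x : α} {ρ : ℝ} (hx : closedBall x ρ ⊆ Ω) :
    ρ ≤ infDist x (frontier Ω) :=
  (le_infDist hfr).2 fun y hy => le_of_not_gt fun hlt =>
    (hΩ.inter_frontier_eq.subset ⟨hx (mem_closedBall'.2 hlt.le), hy⟩ : y ∈ (∅ : Set α))

def boundaryStrip {α : Type*} [PseudoMetricSpace α] (Ω : Set α) (h : ℝ) : Set α :=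
  {x ∈ Ω | infDist x (frontier Ω) ≤ h}

theorem boundaryStrip_subset {α : Type*} [PseudoMetricSpace α] (Ω : Set α) (h : ℝ) :
    boundaryStrip Ω h ⊆ Ω :=
  sep_subset _ _

theorem MeasurableSet.boundaryStrip {α : Type*} [PseudoMetricSpace α] [MeasurableSpace α]
    [OpensMeasurableSpace α] {Ω : Set α} (hΩ : MeasurableSet Ω) (h : ℝ) :
    MeasurableSet (boundaryStrip Ω h) :=
  hΩ.inter (measurableSet_le (continuous_infDist_pt _).measurable measurable_const)

section Geometry

variable {E : Type*} [NormedAddCommGroup E] [NormedSpace ℝ E] {Ω : Set E}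

theorem Convex.closedBall_add_smul_sub_subset (hΩ : Convex ℝ Ω) {x w : E} {ρ s : ℝ}
    (hx : x ∈ Ω) (hw : closedBall w ρ ⊆ Ω) (hs₀ : 0 ≤ s) (hs₁ : s ≤ 1) :
    closedBall (x + s • (w - x)) (s * ρ) ⊆ Ω := by
  rcases hs₀.eq_or_lt with rfl | hs
  · simpa using hx
  calc closedBall (x + s • (w - x)) (s * ρ) = (1 - s) • {x} + s • closedBall w ρ := by
        rw [smul_closedBall' hs.ne', Set.smul_set_singleton, singleton_add_closedBall,
          Real.norm_of_nonneg hs₀]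
        congr 1
        module
    _ ⊆ (1 - s) • Ω + s • Ω :=
        add_subset_add (smul_set_mono (singleton_subset_iff.2 hx)) (smul_set_mono hw)
    _ ⊆ Ω := convex_iff_pointwise_add_subset.1 hΩ (by linarith) hs₀ (by ring)

theorem Bornology.IsBounded.nonempty_frontier [Nontrivial E] (hb : Bornology.IsBounded Ω)
    (hne : Ω.Nonempty) : (frontier Ω).Nonempty :=
  nonempty_frontier_iff.2 ⟨hne, fun h => NormedSpace.unbounded_univ ℝ E (h ▸ hb)⟩

theorem Convex.add_smul_sub_notMem_boundaryStrip (hΩc : Convex ℝ Ω) (hΩo : IsOpen Ω)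
    (hfr : (frontier Ω).Nonempty) {x w : E} {ρ s h : ℝ} (hx : x ∈ Ω) (hw : closedBall w ρ ⊆ Ω)
    (hs₀ : 0 ≤ s) (hs₁ : s ≤ 1) (hh : h < s * ρ) : x + s • (w - x) ∉ boundaryStrip Ω h :=
  fun hmem => (hh.trans_le (hΩo.le_infDist_frontier hfr
    (hΩc.closedBall_add_smul_sub_subset hx hw hs₀ hs₁))).not_ge hmem.2

theorem Convex.disjoint_boundaryStrip_inter_closedBall_vadd (hΩc : Convex ℝ Ω)
    (hΩo : IsOpen Ω) (hfr : (frontier Ω).Nonempty) {z x₀ p : E} {r h d s : ℝ}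
    (hz : closedBall z r ⊆ Ω) (hr : 0 < r) (hh : 0 < h) (hdr : 4 * d ≤ r)
    (hp : p ∈ closedBall x₀ d) (hs₀ : 4 * h / r ≤ s) (hs₁ : s ≤ 1) :
    Disjoint (boundaryStrip Ω h ∩ closedBall x₀ d)
      ((s • (z - p)) +ᵥ (boundaryStrip Ω h ∩ closedBall x₀ d)) := by
  rw [Set.disjoint_right]
  rintro _ ⟨x, ⟨⟨hxΩ, -⟩, hx⟩, rfl⟩ ⟨hmem, -⟩
  have hball : closedBall (z + (x - p)) (r / 2) ⊆ Ω := by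
    refine (closedBall_subset_closedBall' ?_).trans hz
    rw [dist_eq_norm, add_sub_cancel_left, ← dist_eq_norm]
    linarith [dist_triangle_right x p x₀, mem_closedBall.1 hx, mem_closedBall.1 hp]
  have hy : s • (z - p) +ᵥ x = x + s • (z + (x - p) - x) := by
    rw [vadd_eq_add, add_comm]; congr 2; abel
  have hdeep : h < s * (r / 2) := by
    have : 4 * h / r * (r / 2) = 2 * h := by field_simp; ring
    nlinarith
  exact hΩc.add_smul_sub_notMem_boundaryStrip hΩo hfr hxΩ hball
    ((div_nonneg (by positivity) hr.le).trans hs₀) hs₁ hdeep (hy ▸ hmem)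

end Geometry

theorem succ_mul_measure_le_of_disjoint_nsmul_vadd {G α : Type*} [AddGroup G]
    [AddAction G α] [MeasurableSpace α] [MeasurableConstVAdd G α] (μ : Measure α)
    [VAddInvariantMeasure G α μ] {S U : Set α} (hS : MeasurableSet S) (v : G) (N : ℕ)
    (hdisj : ∀ m : ℕ, 0 < m → m ≤ N → Disjoint S ((m • v) +ᵥ S))
    (hU : ∀ k ≤ N, (k • v) +ᵥ S ⊆ U) :
    (N + 1) * μ S ≤ μ U := by
  have hpair : (Finset.range (N + 1) : Set ℕ).PairwiseDisjoint fun k => (k • v) +ᵥ S := by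
    intro j hj k hk hjk
    wlog hlt : j < k generalizing j k
    · exact (this hk hj hjk.symm (hjk.symm.lt_of_le (not_lt.1 hlt))).symm
    have : (k • v) +ᵥ S = (j • v) +ᵥ (((k - j) • v) +ᵥ S) := by
      rw [vadd_vadd, ← add_nsmul, Nat.add_sub_cancel' hlt.le]
    rw [Function.onFun, this, Set.disjoint_vadd_set]
    exact hdisj _ (Nat.sub_pos_of_lt hlt) (by simp at hk; omega)
  calc (N + 1) * μ S = ∑ k ∈ Finset.range (N + 1), μ ((k • v) +ᵥ S) := by simp [measure_vadd]
    _ = μ (⋃ k ∈ Finset.range (N + 1), (k • v) +ᵥ S) :=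
        (measure_biUnion_finset hpair fun k _ => hS.const_vadd _).symm
    _ ≤ μ U := measure_mono <| iUnion₂_subset fun k hk =>
        hU k (Nat.lt_succ_iff.1 (Finset.mem_range.1 hk))

section HaarMeasure

variable {E : Type*} [NormedAddCommGroup E] [NormedSpace ℝ E] [FiniteDimensional ℝ E]
  [MeasurableSpace E] [BorelSpace E] (μ : Measure E) [μ.IsAddHaarMeasure]
  {Ω : Set E} {z : E} {r h : ℝ}

theorem Convex.measureReal_boundaryStrip_le [Nontrivial E] (hΩc : Convex ℝ Ω)
    (hΩo : IsOpen Ω) (hΩb : Bornology.IsBounded Ω) (hz : closedBall z r ⊆ Ω) (hr : 0 < r)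
    (hh : 0 < h) (hhr : 2 * h ≤ r) :
    μ.real (boundaryStrip Ω h) ≤ (1 - (1 - 2 * h / r) ^ finrank ℝ E) * μ.real Ω := by
  have hfin : μ Ω ≠ ∞ := hΩb.measure_lt_top.ne
  have hfr := hΩb.nonempty_frontier ⟨z, hz (mem_closedBall_self hr.le)⟩
  set t := 2 * h / r with ht
  have ht₀ : 0 ≤ t := by positivity
  have ht₁ : t ≤ 1 := by rwa [ht, div_le_one hr]
  set T := AffineMap.homothety z (1 - t) '' Ω
  have hhom : ∀ x, AffineMap.homothety z (1 - t) x = x + t • (z - x) := fun x => by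
    rw [AffineMap.homothety_apply, vsub_eq_sub, vadd_eq_add]; module
  have hTΩ : T ⊆ Ω := by
    rintro _ ⟨x, hx, rfl⟩
    rw [hhom]
    exact hΩc.closedBall_add_smul_sub_subset hx hz ht₀ ht₁ (mem_closedBall_self (by positivity))
  have hTS : Disjoint T (boundaryStrip Ω h) := by
    rw [Set.disjoint_left]
    rintro _ ⟨x, hx, rfl⟩
    rw [hhom]
    refine hΩc.add_smul_sub_notMem_boundaryStrip hΩo hfr hx hz ht₀ ht₁ ?_
    rw [ht, div_mul_cancel₀ _ hr.ne']; linarith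
  have hTvol : μ.real T = (1 - t) ^ finrank ℝ E * μ.real Ω := by
    rw [measureReal_def, Measure.addHaar_image_homothety, ENNReal.toReal_mul,
      ENNReal.toReal_ofReal (abs_nonneg _), abs_of_nonneg (pow_nonneg (by linarith) _),
      measureReal_def]
  have hsum : μ.real T + μ.real (boundaryStrip Ω h) ≤ μ.real Ω := by
    rw [← measureReal_union hTS (hΩo.measurableSet.boundaryStrip h)
      (measure_ne_top_of_subset hTΩ hfin)
      (measure_ne_top_of_subset (boundaryStrip_subset Ω h) hfin)]
    exact measureReal_mono (union_subset hTΩ (boundaryStrip_subset Ω h)) hfin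
  linarith

theorem Convex.measure_boundaryStrip_le [Nontrivial E] (hΩc : Convex ℝ Ω) (hΩo : IsOpen Ω)
    (hΩb : Bornology.IsBounded Ω) (hz : closedBall z r ⊆ Ω) (hr : 0 < r) (hh : 0 < h) :
    μ (boundaryStrip Ω h) ≤ ENNReal.ofReal (2 * finrank ℝ E / r * μ.real Ω * h) := by
  have hfin : μ Ω ≠ ∞ := hΩb.measure_lt_top.ne
  have hΩ₀ : 0 ≤ μ.real Ω := measureReal_nonneg
  have hn : (1 : ℝ) ≤ finrank ℝ E := by exact_mod_cast finrank_pos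
  have hconst : 2 * finrank ℝ E / r * μ.real Ω * h = finrank ℝ E * (2 * h / r) * μ.real Ω := by
    field_simp
  rw [← ofReal_measureReal (measure_ne_top_of_subset (boundaryStrip_subset Ω h) hfin), hconst]
  refine ENNReal.ofReal_le_ofReal ?_
  rcases le_or_gt (r / 2) h with hlarge | hsmall
  · have h1 : 1 ≤ 2 * h / r := by rw [le_div_iff₀ hr]; linarith
    calc μ.real (boundaryStrip Ω h) ≤ μ.real Ω :=
          measureReal_mono (boundaryStrip_subset Ω h) hfin
      _ ≤ finrank ℝ E * (2 * h / r) * μ.real Ω := le_mul_of_one_le_left hΩ₀ (by nlinarith)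
  have hbernoulli : 1 - finrank ℝ E * (2 * h / r) ≤ (1 - 2 * h / r) ^ finrank ℝ E := by
    have := one_add_mul_le_pow (show -2 ≤ -(2 * h / r) by
      have : 2 * h / r ≤ 1 := by rw [div_le_one hr]; linarith
      linarith) (finrank ℝ E)
    simpa [← sub_eq_add_neg] using this
  calc μ.real (boundaryStrip Ω h)
      ≤ (1 - (1 - 2 * h / r) ^ finrank ℝ E) * μ.real Ω :=
        hΩc.measureReal_boundaryStrip_le μ hΩo hΩb hz hr hh (by linarith)
    _ ≤ finrank ℝ E * (2 * h / r) * μ.real Ω := by gcongr; linarith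

theorem Convex.ofReal_div_mul_measure_boundaryStrip_inter_closedBall_le (hΩc : Convex ℝ Ω)
    (hΩo : IsOpen Ω) (hfr : (frontier Ω).Nonempty) (hz : closedBall z r ⊆ Ω) (hr : 0 < r)
    {R : ℝ} (hR : Ω ⊆ closedBall z R) (hh : 0 < h) {d : ℝ} (hdr : 4 * d ≤ r) (x₀ : E) :
    ENNReal.ofReal (d / h) * μ (boundaryStrip Ω h ∩ closedBall x₀ d) ≤
      μ (closedBall x₀ ((1 + 4 * R / r) * d)) := by
  set S := boundaryStrip Ω h ∩ closedBall x₀ d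
  rcases S.eq_empty_or_nonempty with hS | ⟨p, ⟨hpΩ, -⟩, hp⟩
  · simp [hS]
  have hd : 0 ≤ d := dist_nonneg.trans hp
  set N := ⌊d / h⌋₊
  have hN : (N : ℝ) * (4 * h / r) ≤ 4 * d / r := by
    have : (N : ℝ) * h ≤ d := (le_div_iff₀ hh).1 (Nat.floor_le (div_nonneg hd hh.le))
    rw [mul_div_assoc', div_le_div_iff_of_pos_right hr]; linarith
  calc ENNReal.ofReal (d / h) * μ S ≤ (N + 1) * μ S := by
        gcongr
        calc ENNReal.ofReal (d / h) ≤ ENNReal.ofReal (N + 1) :=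
              ENNReal.ofReal_le_ofReal (Nat.lt_floor_add_one _).le
          _ = N + 1 := by rw [← Nat.cast_add_one, ENNReal.ofReal_natCast]; norm_cast
    _ ≤ _ := succ_mul_measure_le_of_disjoint_nsmul_vadd μ
        ((hΩo.measurableSet.boundaryStrip h).inter measurableSet_closedBall)
        ((4 * h / r) • (z - p)) N (fun m hm hmN => ?_) (fun k hk => ?_)
  · rw [← Nat.cast_smul_eq_nsmul ℝ, smul_smul]
    refine hΩc.disjoint_boundaryStrip_inter_closedBall_vadd hΩo hfr hz hr hh hdr hp ?_ ?_
    · exact le_mul_of_one_le_left (by positivity) (by exact_mod_cast hm)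
    · calc (m : ℝ) * (4 * h / r) ≤ N * (4 * h / r) := by gcongr
        _ ≤ 4 * d / r := hN
        _ ≤ 1 := by rwa [div_le_one hr]
  · rintro _ ⟨x, ⟨-, hx⟩, rfl⟩
    have hzp : ‖z - p‖ ≤ R := by rw [← dist_eq_norm']; exact hR hpΩ
    have hshift : ‖k • (4 * h / r) • (z - p)‖ ≤ 4 * R / r * d := by
      rw [← Nat.cast_smul_eq_nsmul ℝ, smul_smul, norm_smul, Real.norm_of_nonneg (by positivity)]
      calc (k : ℝ) * (4 * h / r) * ‖z - p‖ ≤ N * (4 * h / r) * R := by gcongr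
        _ ≤ 4 * d / r * R := by gcongr; exact (norm_nonneg _).trans hzp
        _ = 4 * R / r * d := by ring
    calc dist (k • (4 * h / r) • (z - p) +ᵥ x) x₀
        ≤ ‖k • (4 * h / r) • (z - p)‖ + dist x x₀ := by
          rw [vadd_eq_add, dist_eq_norm, dist_eq_norm, add_sub_assoc]; exact norm_add_le _ _
      _ ≤ (1 + 4 * R / r) * d := by linarith [mem_closedBall.1 hx]

theorem Convex.measure_boundaryStrip_inter_closedBall_le_of_four_mul_le [Nontrivial E]
    (hΩc : Convex ℝ Ω) (hΩo : IsOpen Ω) (hfr : (frontier Ω).Nonempty)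
    (hz : closedBall z r ⊆ Ω) (hr : 0 < r) {R : ℝ} (hR : Ω ⊆ closedBall z R) (hh : 0 < h)
    {d : ℝ} (hd : 0 < d) (hdr : 4 * d ≤ r) (x₀ : E) :
    μ (boundaryStrip Ω h ∩ closedBall x₀ d) ≤ ENNReal.ofReal
      ((1 + 4 * R / r) ^ finrank ℝ E * μ.real (closedBall 0 1) * h * d ^ (finrank ℝ E - 1)) := by
  have hR₀ : 0 ≤ R := nonempty_closedBall.1 ⟨z, hR (hz (mem_closedBall_self hr.le))⟩
  have hloc := hΩc.ofReal_div_mul_measure_boundaryStrip_inter_closedBall_le μ hΩo hfr hz hr hR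
    hh hdr x₀
  rw [Measure.addHaar_closedBall' μ x₀ (by positivity),
    ← ofReal_measureReal (measure_closedBall_lt_top (x := (0 : E)) (r := 1)).ne,
    ← ENNReal.ofReal_mul (by positivity)] at hloc
  set S := boundaryStrip Ω h ∩ closedBall x₀ d
  calc μ S = ENNReal.ofReal (h / d) * (ENNReal.ofReal (d / h) * μ S) := by
        have : h / d * (d / h) = 1 := by field_simp
        rw [← mul_assoc, ← ENNReal.ofReal_mul (by positivity), this, ENNReal.ofReal_one, one_mul]
    _ ≤ ENNReal.ofReal (h / d) *
          ENNReal.ofReal (((1 + 4 * R / r) * d) ^ finrank ℝ E * μ.real (closedBall 0 1)) := by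
        gcongr
    _ = _ := by
        rw [← ENNReal.ofReal_mul (by positivity)]
        congr 1
        have hdn : d ^ finrank ℝ E = d * d ^ (finrank ℝ E - 1) := by
          rw [← pow_succ', Nat.sub_add_cancel finrank_pos]
        rw [mul_pow, hdn]
        field_simp

theorem Convex.exists_measure_boundaryStrip_inter_closedBall_le [Nontrivial E]
    (hΩc : Convex ℝ Ω) (hΩo : IsOpen Ω) (hΩb : Bornology.IsBounded Ω) :
    ∃ C : ℝ, ∀ h d : ℝ, 0 < h → h ≤ d → ∀ x₀ : E,
      μ (boundaryStrip Ω h ∩ closedBall x₀ d) ≤ ENNReal.ofReal (C * h * d ^ (finrank ℝ E - 1)) := by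
  rcases Ω.eq_empty_or_nonempty with rfl | ⟨z, hzΩ⟩
  · exact ⟨0, fun h d _ _ x₀ => by simp [boundaryStrip]⟩
  obtain ⟨r, hr, hz⟩ := nhds_basis_closedBall.mem_iff.1 (hΩo.mem_nhds hzΩ)
  obtain ⟨R, hR⟩ := hΩb.subset_closedBall z
  have hfr := hΩb.nonempty_frontier ⟨z, hzΩ⟩
  set n := finrank ℝ E
  set C₁ := (1 + 4 * R / r) ^ n * μ.real (closedBall 0 1)
  set C₂ := 2 * n / r * μ.real Ω * (4 / r) ^ (n - 1)
  have hC₁ : 0 ≤ C₁ := by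
    have : 0 ≤ R := nonempty_closedBall.1 ⟨z, hR hzΩ⟩
    positivity
  have hC₂ : 0 ≤ C₂ := by positivity
  refine ⟨C₁ + C₂, fun h d hh hhd x₀ => ?_⟩
  have hd : 0 < d := hh.trans_le hhd
  rcases le_or_gt (4 * d) r with hsmall | hlarge
  · calc _ ≤ ENNReal.ofReal (C₁ * h * d ^ (n - 1)) :=
          hΩc.measure_boundaryStrip_inter_closedBall_le_of_four_mul_le μ hΩo hfr hz hr hR hh hd
            hsmall x₀
      _ ≤ _ := ENNReal.ofReal_le_ofReal (by gcongr; linarith)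
  have hpow : 1 ≤ (4 / r * d) ^ (n - 1) :=
    one_le_pow₀ (by rw [div_mul_eq_mul_div, le_div_iff₀ hr]; linarith)
  calc _ ≤ μ (boundaryStrip Ω h) := measure_mono inter_subset_left
    _ ≤ ENNReal.ofReal (2 * n / r * μ.real Ω * h) :=
        hΩc.measure_boundaryStrip_le μ hΩo hΩb hz hr hh
    _ ≤ ENNReal.ofReal (C₂ * h * d ^ (n - 1)) := by
        refine ENNReal.ofReal_le_ofReal ?_
        calc 2 * n / r * μ.real Ω * h ≤ 2 * n / r * μ.real Ω * h * (4 / r * d) ^ (n - 1) :=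
              le_mul_of_one_le_right (by positivity) hpow
          _ = C₂ * h * d ^ (n - 1) := by ring
    _ ≤ _ := ENNReal.ofReal_le_ofReal (by gcongr; linarith)

end HaarMeasure

/-- **Volume of the intersection of a boundary strip with a ball (estimate (4.2)).** -/
theorem boundary_strip_ball_volume
    (Ω : Set E3) (hΩo : IsOpen Ω) (hΩb : Bornology.IsBounded Ω) (hΩc : Convex ℝ Ω) :
    ∃ C : ℝ, ∀ h d : ℝ, 0 < h → h ≤ d → ∀ x₀ : E3,
      volume {x ∈ Ω | Metric.infDist x (frontier Ω) ≤ h ∧ dist x x₀ ≤ d}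
        ≤ ENNReal.ofReal (C * h * d ^ 2) := by
  obtain ⟨C, hC⟩ := hΩc.exists_measure_boundaryStrip_inter_closedBall_le volume hΩo hΩb
  refine ⟨C, fun h d hh hhd x₀ => ?_⟩
  have hset : {x ∈ Ω | infDist x (frontier Ω) ≤ h ∧ dist x x₀ ≤ d} =
      boundaryStrip Ω h ∩ closedBall x₀ d := by
    ext x; simp only [boundaryStrip, mem_inter_iff, mem_sep_iff, mem_closedBall, and_assoc]
  simpa [hset, finrank_euclideanSpace] using hC h d hh hhd x₀
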